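/- Let F ∈ C^2([T_0,∞)) satisfy F(t) ≥ c_0 (1+t)^r and F''(t) ≥ c_1 (1+t)^{-q} |F(t)|^p for t ≥ T_0, with constants c_0, c_1 > 0, p > 1, r ≥ 1, and (p-1)r > q - 2. Then F cannot exist on all of [T_0,∞); i.e., there is T < ∞ with lim_{t→T^-} F(t) = ∞ (Kato's lemma). -/

import Mathlib

/-!
If `f'' ≥ m f ^ p` with `p > 1`, `f > 0` and `f' ≥ 0` at the left end of an interval `[a, b]`,
then `m f(a) ^ (p - 1) (b - a) ^ 2` is bounded by a constant depending only on `p`.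
Indeed, unless that quantity is already small, `f'' ≥ m f(a) ^ p` makes `f` double by the
midpoint; from then on the energy `f' ^ 2 - 2m/(p+1) f ^ (p + 1)`, which is nondecreasing, gives
`f' ≥ κ f ^ ((p + 1) / 2)`, so `f ^ (-(p - 1) / 2)` decreases at rate `κ (p - 1) / 2` while
staying positive.

For Kato's inequalities apply this on `[x - 1, 2x - 1]`, where `m ≈ x ^ (-q)` and
`F(x - 1) ≥ c₀ x ^ r`: the bounded quantity is at least of order `x ^ ((p - 1) r - q + 2)`,
which tends to infinity. That `F' ≥ 0` for large times follows from convexity of the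
unbounded function `F`.
-/

open Set Filter Real

section SecondOrder

variable {f f' f'' : ℝ → ℝ} {a b : ℝ}

lemma monotoneOn_Icc_of_hasDerivAt_nonneg (hf : ∀ t ∈ Icc a b, HasDerivAt f (f' t) t)
    (h : ∀ t ∈ Ioo a b, 0 ≤ f' t) : MonotoneOn f (Icc a b) :=
  monotoneOn_of_hasDerivWithinAt_nonneg (convex_Icc a b)
    (fun t ht => (hf t ht).continuousAt.continuousWithinAt)
    (fun t ht => (hf t (interior_subset ht)).hasDerivWithinAt)
    (fun t ht => h t (by rwa [interior_Icc] at ht))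

lemma add_div_two_mul_sq_le_of_le_second_deriv {k : ℝ} (hab : a ≤ b)
    (hf : ∀ t ∈ Icc a b, HasDerivAt f (f' t) t) (hf' : ∀ t ∈ Icc a b, HasDerivAt f' (f'' t) t)
    (ha : 0 ≤ f' a) (hk : ∀ t ∈ Icc a b, k ≤ f'' t) :
    f a + k / 2 * (b - a) ^ 2 ≤ f b := by
  have hslope : ∀ t ∈ Icc a b, k * (t - a) ≤ f' t := by
    have hmono := monotoneOn_Icc_of_hasDerivAt_nonneg (f := fun t => f' t - k * (t - a))
      (fun t ht => (hf' t ht).sub (((hasDerivAt_id t).sub_const a).const_mul k))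
      (fun t ht => by simpa using hk t (Ioo_subset_Icc_self ht))
    intro t ht
    have hat := hmono (left_mem_Icc.2 hab) ht ht.1
    simp only [sub_self, mul_zero, sub_zero] at hat
    linarith
  have hmono := monotoneOn_Icc_of_hasDerivAt_nonneg (f := fun t => f t - k / 2 * (t - a) ^ 2)
    (fun t ht => (hf t ht).sub ((((hasDerivAt_id t).sub_const a).pow 2).const_mul (k / 2)))
    (fun t ht => by
      have := hslope t (Ioo_subset_Icc_self ht)
      simp only [id, Nat.cast_ofNat, mul_one]
      linarith)
  have hab' := hmono (left_mem_Icc.2 hab) (right_mem_Icc.2 hab) hab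
  simp only [sub_self, ne_eq, OfNat.ofNat_ne_zero, not_false_eq_true, zero_pow, mul_zero,
    sub_zero] at hab'
  linarith

lemma monotoneOn_deriv_sq_sub_mul_rpow {m p : ℝ} (hp : p + 1 ≠ 0)
    (hf : ∀ t ∈ Icc a b, HasDerivAt f (f' t) t) (hf' : ∀ t ∈ Icc a b, HasDerivAt f' (f'' t) t)
    (hpos : ∀ t ∈ Icc a b, 0 < f t) (hf'0 : ∀ t ∈ Icc a b, 0 ≤ f' t)
    (h : ∀ t ∈ Icc a b, m * f t ^ p ≤ f'' t) :
    MonotoneOn (fun t => f' t ^ 2 - 2 * m / (p + 1) * f t ^ (p + 1)) (Icc a b) := by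
  refine monotoneOn_Icc_of_hasDerivAt_nonneg
    (fun t ht => ((hf' t ht).pow 2).sub
      (((hf t ht).rpow_const (Or.inl (hpos t ht).ne')).const_mul (2 * m / (p + 1))))
    (fun t ht => ?_)
  have ht := Ioo_subset_Icc_self ht
  have hprod : 0 ≤ f' t * (f'' t - m * f t ^ p) := mul_nonneg (hf'0 t ht) (by linarith [h t ht])
  calc (0 : ℝ) ≤ 2 * (f' t * (f'' t - m * f t ^ p)) := mul_nonneg two_pos.le hprod
    _ = _ := by rw [add_sub_cancel_right]; field_simp; ring

lemma mul_sub_le_rpow_neg_of_mul_rpow_le_deriv {α κ : ℝ} (hα : 0 ≤ α) (hab : a ≤ b)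
    (hf : ∀ t ∈ Icc a b, HasDerivAt f (f' t) t) (hpos : ∀ t ∈ Icc a b, 0 < f t)
    (h : ∀ t ∈ Icc a b, κ * f t ^ (1 + α) ≤ f' t) :
    α * κ * (b - a) ≤ f a ^ (-α) := by
  have hmono := monotoneOn_Icc_of_hasDerivAt_nonneg (f := fun t => -f t ^ (-α) - α * κ * t)
    (fun t ht => ((hf t ht).rpow_const (Or.inl (hpos t ht).ne')).neg.sub
      ((hasDerivAt_id t).const_mul (α * κ)))
    (fun t ht => by
      have ht := Ioo_subset_Icc_self ht
      have hft := hpos t ht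
      have hκ : κ ≤ f t ^ (-α - 1) * f' t := by
        have : f t ^ (-α - 1) * f t ^ (1 + α) = 1 := by
          rw [← rpow_add hft, show -α - 1 + (1 + α) = 0 by ring, rpow_zero]
        calc κ = f t ^ (-α - 1) * (κ * f t ^ (1 + α)) := by rw [mul_left_comm, this, mul_one]
          _ ≤ _ := mul_le_mul_of_nonneg_left (h t ht) (rpow_nonneg hft.le _)
      simp only [mul_one]
      nlinarith [mul_le_mul_of_nonneg_left hκ hα])
  have hab' := hmono (left_mem_Icc.2 hab) (right_mem_Icc.2 hab) hab
  have hb : 0 < f b ^ (-α) := rpow_pos_of_pos (hpos b (right_mem_Icc.2 hab)) _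
  simp only at hab'
  linarith

lemma sqrt_mul_rpow_le_deriv_of_two_mul_le {m p t : ℝ} (hp : 0 ≤ p) (hm : 0 ≤ m) (hat : a ≤ t)
    (hf : ∀ s ∈ Icc a t, HasDerivAt f (f' s) s) (hf' : ∀ s ∈ Icc a t, HasDerivAt f' (f'' s) s)
    (hpos : ∀ s ∈ Icc a t, 0 < f s) (hf'0 : ∀ s ∈ Icc a t, 0 ≤ f' s)
    (h : ∀ s ∈ Icc a t, m * f s ^ p ≤ f'' s) (hdouble : 2 * f a ≤ f t) :
    √(m / (p + 1)) * f t ^ ((p + 1) / 2) ≤ f' t := by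
  have hfa := hpos a (left_mem_Icc.2 hat)
  have hft := hpos t (right_mem_Icc.2 hat)
  have henergy := monotoneOn_deriv_sq_sub_mul_rpow (by positivity) hf hf' hpos hf'0 h
    (left_mem_Icc.2 hat) (right_mem_Icc.2 hat) hat
  have hhalf : f a ^ (p + 1) ≤ f t ^ (p + 1) / 2 := by
    have h2 : (2 : ℝ) ≤ 2 ^ (p + 1) := by
      simpa using rpow_le_rpow_of_exponent_le one_le_two (by linarith : (1 : ℝ) ≤ p + 1)
    have := rpow_le_rpow (by positivity) hdouble (by positivity : (0 : ℝ) ≤ p + 1)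
    rw [mul_rpow zero_le_two hfa.le] at this
    nlinarith [rpow_pos_of_pos hfa (p + 1)]
  have hsq : m / (p + 1) * f t ^ (p + 1) ≤ f' t ^ 2 := by
    have : 2 * m / (p + 1) * f a ^ (p + 1) ≤ 2 * m / (p + 1) * (f t ^ (p + 1) / 2) :=
      mul_le_mul_of_nonneg_left hhalf (by positivity)
    have hhalve : 2 * m / (p + 1) * (f t ^ (p + 1) / 2) = m / (p + 1) * f t ^ (p + 1) := by ring
    simp only at henergy
    nlinarith [sq_nonneg (f' a)]
  rw [← pow_le_pow_iff_left₀ (by positivity) (hf'0 t (right_mem_Icc.2 hat)) two_ne_zero,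
    mul_pow, sq_sqrt (by positivity), ← rpow_natCast, ← rpow_mul hft.le]
  rwa [show (p + 1) / 2 * ((2 : ℕ) : ℝ) = p + 1 by push_cast; ring]

lemma mul_rpow_mul_sq_le_of_two_mul_le {m p s : ℝ} (hp : 1 < p) (hm : 0 ≤ m) (has : a ≤ s)
    (hsb : s ≤ b) (hf : ∀ t ∈ Icc a b, HasDerivAt f (f' t) t)
    (hf' : ∀ t ∈ Icc a b, HasDerivAt f' (f'' t) t) (hpos : ∀ t ∈ Icc a b, 0 < f t)
    (hf'0 : ∀ t ∈ Icc a b, 0 ≤ f' t) (h : ∀ t ∈ Icc a b, m * f t ^ p ≤ f'' t)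
    (hdouble : 2 * f a ≤ f s) :
    m * f a ^ (p - 1) * (b - s) ^ 2 ≤ 4 * (p + 1) / (p - 1) ^ 2 := by
  have hfa := hpos a ⟨le_rfl, has.trans hsb⟩
  have hmono : MonotoneOn f (Icc a b) :=
    monotoneOn_Icc_of_hasDerivAt_nonneg hf fun t ht => hf'0 t (Ioo_subset_Icc_self ht)
  have hgrad : ∀ t ∈ Icc s b, √(m / (p + 1)) * f t ^ (1 + (p - 1) / 2) ≤ f' t := by
    intro t ht
    have hsub : Icc a t ⊆ Icc a b := Icc_subset_Icc_right ht.2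
    rw [show 1 + (p - 1) / 2 = (p + 1) / 2 by ring]
    exact sqrt_mul_rpow_le_deriv_of_two_mul_le (by linarith) hm (has.trans ht.1)
      (fun u hu => hf u (hsub hu)) (fun u hu => hf' u (hsub hu)) (fun u hu => hpos u (hsub hu))
      (fun u hu => hf'0 u (hsub hu)) (fun u hu => h u (hsub hu))
      (hdouble.trans (hmono ⟨has, hsb⟩ ⟨has.trans ht.1, ht.2⟩ ht.1))
  have hsub : Icc s b ⊆ Icc a b := Icc_subset_Icc_left has
  have hlife := mul_sub_le_rpow_neg_of_mul_rpow_le_deriv (by linarith) hsb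
    (fun t ht => hf t (hsub ht)) (fun t ht => hpos t (hsub ht)) hgrad
  have hfs : f s ^ (-((p - 1) / 2)) ≤ f a ^ (-((p - 1) / 2)) :=
    rpow_le_rpow_of_nonpos hfa (hmono ⟨le_rfl, has.trans hsb⟩ ⟨has, hsb⟩ has) (by linarith)
  have hsq := pow_le_pow_left₀ (by positivity) (hlife.trans hfs) 2
  have hA : (f a ^ (-((p - 1) / 2))) ^ 2 = 1 / f a ^ (p - 1) := by
    rw [one_div, ← rpow_neg hfa.le, ← rpow_natCast, ← rpow_mul hfa.le]
    congr 1; push_cast; ring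
  rw [hA, le_div_iff₀ (rpow_pos_of_pos hfa _), mul_pow, mul_pow, sq_sqrt (by positivity)] at hsq
  rw [le_div_iff₀ (by nlinarith)]
  calc m * f a ^ (p - 1) * (b - s) ^ 2 * (p - 1) ^ 2
      = 4 * (p + 1) * (((p - 1) / 2) ^ 2 * (m / (p + 1)) * (b - s) ^ 2 * f a ^ (p - 1)) := by
        field_simp; ring
    _ ≤ 4 * (p + 1) * 1 := mul_le_mul_of_nonneg_left hsq (by linarith)
    _ = 4 * (p + 1) := mul_one _

theorem mul_rpow_mul_sq_le_of_mul_rpow_le_second_deriv {m p : ℝ} (hp : 1 < p) (hab : a ≤ b)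
    (hf : ∀ t ∈ Icc a b, HasDerivAt f (f' t) t) (hf' : ∀ t ∈ Icc a b, HasDerivAt f' (f'' t) t)
    (hpos : ∀ t ∈ Icc a b, 0 < f t) (ha : 0 ≤ f' a) (h : ∀ t ∈ Icc a b, m * f t ^ p ≤ f'' t) :
    m * f a ^ (p - 1) * (b - a) ^ 2 ≤ 8 + 16 * (p + 1) / (p - 1) ^ 2 := by
  have hC : 0 ≤ 16 * (p + 1) / (p - 1) ^ 2 := div_nonneg (by linarith) (sq_nonneg _)
  obtain hsmall | hlarge := le_or_gt (m * f a ^ (p - 1) * (b - a) ^ 2) 8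
  · linarith
  have hfa := hpos a (left_mem_Icc.2 hab)
  have hm : 0 < m := by
    by_contra! hm
    have hnonpos : m * f a ^ (p - 1) * (b - a) ^ 2 ≤ 0 := mul_nonpos_of_nonpos_of_nonneg
      (mul_nonpos_of_nonpos_of_nonneg hm (rpow_nonneg hfa.le _)) (sq_nonneg _)
    linarith
  have hf''0 : ∀ t ∈ Icc a b, 0 ≤ f'' t := fun t ht =>
    (mul_nonneg hm.le (rpow_nonneg (hpos t ht).le _)).trans (h t ht)
  have hf'0 : ∀ t ∈ Icc a b, 0 ≤ f' t := fun t ht =>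
    ha.trans (monotoneOn_Icc_of_hasDerivAt_nonneg hf' (fun u hu => hf''0 u (Ioo_subset_Icc_self hu))
      (left_mem_Icc.2 hab) ht ht.1)
  have hmono : MonotoneOn f (Icc a b) :=
    monotoneOn_Icc_of_hasDerivAt_nonneg hf fun u hu => hf'0 u (Ioo_subset_Icc_self hu)
  set s := (a + b) / 2 with hs
  have has : a ≤ s := by linarith
  have hsb : s ≤ b := by linarith
  have hsub : Icc a s ⊆ Icc a b := Icc_subset_Icc_right hsb
  have hdouble : 2 * f a ≤ f s := by
    have hgrow := add_div_two_mul_sq_le_of_le_second_deriv (k := m * f a ^ p) has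
      (fun t ht => hf t (hsub ht)) (fun t ht => hf' t (hsub ht)) ha
      (fun t ht => (mul_le_mul_of_nonneg_left (rpow_le_rpow hfa.le
        (hmono (left_mem_Icc.2 hab) (hsub ht) ht.1) (by linarith)) hm.le).trans (h t (hsub ht)))
    have hsplit : m * f a ^ p / 2 * (s - a) ^ 2 = f a * (m * f a ^ (p - 1) * (b - a) ^ 2) / 8 := by
      rw [hs, rpow_sub_one hfa.ne']
      field_simp
      ring
    nlinarith
  have hlate := mul_rpow_mul_sq_le_of_two_mul_le hp hm.le has hsb hf hf' hpos hf'0 h hdouble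
  rw [show b - s = (b - a) / 2 by rw [hs]; ring] at hlate
  have hquarter :
      m * f a ^ (p - 1) * (b - a) ^ 2 = 4 * (m * f a ^ (p - 1) * ((b - a) / 2) ^ 2) := by
    ring
  have hC' : 16 * (p + 1) / (p - 1) ^ 2 = 4 * (4 * (p + 1) / (p - 1) ^ 2) := by ring
  linarith

lemma eventually_deriv_nonneg_of_tendsto_atTop
    (hf : ∀ᶠ t in atTop, HasDerivAt f (f' t) t) (hf' : ∀ᶠ t in atTop, HasDerivAt f' (f'' t) t)
    (hf'' : ∀ᶠ t in atTop, 0 ≤ f'' t) (htop : Tendsto f atTop atTop) :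
    ∀ᶠ t in atTop, 0 ≤ f' t := by
  obtain ⟨T, hT⟩ := eventually_atTop.1 (hf.and (hf'.and hf''))
  by_cases hturn : ∃ t₀ ≥ T, 0 ≤ f' t₀
  · obtain ⟨t₀, hTt₀, ht₀⟩ := hturn
    filter_upwards [eventually_ge_atTop t₀] with t ht
    exact ht₀.trans (monotoneOn_Icc_of_hasDerivAt_nonneg (fun u hu => (hT u (hTt₀.trans hu.1)).2.1)
      (fun u hu => (hT u (hTt₀.trans hu.1.le)).2.2) (left_mem_Icc.2 ht) (right_mem_Icc.2 ht) ht)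
  · push Not at hturn
    obtain ⟨t, hft, hTt⟩ := ((htop.eventually_gt_atTop (f T)).and (eventually_ge_atTop T)).exists
    have hanti := monotoneOn_Icc_of_hasDerivAt_nonneg (f := fun u => -f u)
      (fun u hu => (hT u hu.1).1.neg) (fun u hu => neg_nonneg.2 (hturn u hu.1.le).le)
      (left_mem_Icc.2 hTt) (right_mem_Icc.2 hTt) hTt
    simp only [neg_le_neg_iff] at hanti
    linarith

end SecondOrder

lemma two_rpow_neg_abs_mul_rpow_le {x y s : ℝ} (hx : 0 < x) (hxy : x ≤ y) (hy : y ≤ 2 * x) :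
    2 ^ (-|s|) * x ^ s ≤ y ^ s := by
  rcases le_total 0 s with hs | hs
  · calc 2 ^ (-|s|) * x ^ s ≤ 1 * x ^ s := mul_le_mul_of_nonneg_right
          (rpow_le_one_of_one_le_of_nonpos one_le_two (by simp)) (rpow_nonneg hx.le _)
      _ ≤ y ^ s := by rw [one_mul]; exact rpow_le_rpow hx.le hxy hs
  · calc 2 ^ (-|s|) * x ^ s = (2 * x) ^ s := by
          rw [abs_of_nonpos hs, neg_neg, mul_rpow zero_le_two hx.le]
      _ ≤ y ^ s := rpow_le_rpow_of_nonpos (hx.trans_le hxy) hy hs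

lemma kato_window_mul_rpow_le {T₀ c₀ c₁ p r q x : ℝ} {f f' f'' : ℝ → ℝ} (hc₀ : 0 < c₀)
    (hc₁ : 0 ≤ c₁) (hp : 1 < p) (hf : ∀ t, T₀ ≤ t → HasDerivAt f (f' t) t)
    (hf' : ∀ t, T₀ ≤ t → HasDerivAt f' (f'' t) t)
    (hlow : ∀ t, T₀ ≤ t → c₀ * (1 + t) ^ r ≤ f t)
    (hineq : ∀ t, T₀ ≤ t → c₁ * (1 + t) ^ (-q) * |f t| ^ p ≤ f'' t)
    (hx₀ : 0 < x) (hxT₀ : T₀ + 1 ≤ x) (hx : 0 ≤ f' (x - 1)) :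
    c₁ * 2 ^ (-|q|) * c₀ ^ (p - 1) * x ^ ((p - 1) * r - q + 2)
      ≤ 8 + 16 * (p + 1) / (p - 1) ^ 2 := by
  have hwin : Icc (x - 1) (2 * x - 1) ⊆ Ici T₀ := fun t ht => by
    simp only [mem_Ici]; linarith [ht.1]
  have hpos : ∀ t ∈ Icc (x - 1) (2 * x - 1), 0 < f t := fun t ht =>
    (mul_pos hc₀ (rpow_pos_of_pos (by linarith [ht.1]) r)).trans_le (hlow t (hwin ht))
  -- On the window `1 + t ∈ [x, 2x]`, so the weight `(1 + t) ^ (-q)` is comparable to `x ^ (-q)`.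
  have hbound := mul_rpow_mul_sq_le_of_mul_rpow_le_second_deriv (m := c₁ * (2 ^ (-|q|) * x ^ (-q)))
    hp (by linarith : x - 1 ≤ 2 * x - 1) (fun t ht => hf t (hwin ht))
    (fun t ht => hf' t (hwin ht)) hpos hx (fun t ht => by
      have h1t := two_rpow_neg_abs_mul_rpow_le (s := -q) hx₀ (by linarith [ht.1] : x ≤ 1 + t)
        (by linarith [ht.2])
      rw [abs_neg] at h1t
      have hft := hpos t ht
      calc c₁ * (2 ^ (-|q|) * x ^ (-q)) * f t ^ p ≤ c₁ * (1 + t) ^ (-q) * |f t| ^ p := by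
            rw [abs_of_pos hft]
            gcongr
        _ ≤ _ := hineq t (hwin ht))
  have hfx : (c₀ * x ^ r) ^ (p - 1) ≤ f (x - 1) ^ (p - 1) :=
    rpow_le_rpow (by positivity) (by simpa using hlow (x - 1) (by linarith)) (by linarith)
  have hsplit : x ^ ((p - 1) * r - q + 2) = x ^ (-q) * (x ^ r) ^ (p - 1) * x ^ 2 := by
    rw [← rpow_mul hx₀.le, ← rpow_two, ← rpow_add hx₀, ← rpow_add hx₀]
    ring_nf
  calc c₁ * 2 ^ (-|q|) * c₀ ^ (p - 1) * x ^ ((p - 1) * r - q + 2)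
      = c₁ * (2 ^ (-|q|) * x ^ (-q)) * (c₀ * x ^ r) ^ (p - 1) * x ^ 2 := by
        rw [hsplit, mul_rpow hc₀.le (rpow_nonneg hx₀.le _)]; ring
    _ ≤ c₁ * (2 ^ (-|q|) * x ^ (-q)) * f (x - 1) ^ (p - 1) * (2 * x - 1 - (x - 1)) ^ 2 := by
        rw [show 2 * x - 1 - (x - 1) = x by ring]
        gcongr
    _ ≤ _ := hbound

theorem kato_blowup_general (T₀ c₀ c₁ p r q : ℝ) (F : ℝ → ℝ)
    (hc₀ : 0 < c₀) (hc₁ : 0 < c₁) (hp : 1 < p) (hr : 1 ≤ r)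
    (hpq : q - 2 < (p - 1) * r)
    (hF : ∀ t : ℝ, T₀ ≤ t → ContDiffAt ℝ 2 F t)
    (hlow : ∀ t : ℝ, T₀ ≤ t → c₀ * (1 + t) ^ r ≤ F t)
    (hineq : ∀ t : ℝ, T₀ ≤ t → c₁ * (1 + t) ^ (-q) * |F t| ^ p ≤ deriv (deriv F) t) :
    False := by
  have hF₁ : ∀ t, T₀ ≤ t → HasDerivAt F (deriv F t) t := fun t ht =>
    ((hF t ht).differentiableAt (by norm_num)).hasDerivAt
  have hF₂ : ∀ t, T₀ ≤ t → HasDerivAt (deriv F) (deriv (deriv F) t) t := fun t ht =>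
    (((hF t ht).derivWithin (m := 1) (by norm_num)).differentiableAt one_ne_zero).hasDerivAt
  have htop : Tendsto F atTop atTop := by
    refine tendsto_atTop_mono' atTop ?_ (((tendsto_rpow_atTop (y := r) (by linarith)).comp
      (tendsto_atTop_add_const_left _ 1 tendsto_id)).const_mul_atTop hc₀)
    filter_upwards [eventually_ge_atTop T₀] with t ht using hlow t ht
  have hF' : ∀ᶠ t in atTop, 0 ≤ deriv F t := eventually_deriv_nonneg_of_tendsto_atTop
    (eventually_atTop.2 ⟨T₀, hF₁⟩) (eventually_atTop.2 ⟨T₀, hF₂⟩) (by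
      filter_upwards [eventually_ge_atTop T₀, eventually_gt_atTop (-1)] with t ht h1t
      exact (mul_nonneg (mul_nonneg hc₁.le (rpow_nonneg (by linarith) _))
        (rpow_nonneg (abs_nonneg _) _)).trans (hineq t ht)) htop
  have hgrow : Tendsto (fun x => c₁ * 2 ^ (-|q|) * c₀ ^ (p - 1) * x ^ ((p - 1) * r - q + 2))
      atTop atTop := (tendsto_rpow_atTop (by linarith)).const_mul_atTop (by positivity)
  obtain ⟨x, hxC, hx₀, hxT₀, hxF'⟩ :=
    ((hgrow.eventually_gt_atTop (8 + 16 * (p + 1) / (p - 1) ^ 2)).and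
      ((eventually_gt_atTop 0).and ((eventually_ge_atTop (T₀ + 1)).and
        ((tendsto_atTop_add_const_right _ (-1) tendsto_id).eventually hF')))).exists
  exact hxC.not_ge (kato_window_mul_rpow_le hc₀ hc₁.le hp hF₁ hF₂ hlow hineq hx₀ hxT₀
    (by simpa [sub_eq_add_neg] using hxF'))

/-- Kato's lemma: there is no `F ∈ C²([T₀,∞))` satisfying
`F(t) ≥ c₀ (1+t)^r` and `F''(t) ≥ c₁ (1+t)^{-q} |F(t)|^p` for all `t ≥ T₀`,
when `c₀, c₁ > 0`, `p > 1`, `r ≥ 1` and `(p-1)r > q-2`; i.e. such differential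
inequalities force blow-up in finite time. -/
theorem kato_blowup (T₀ c₀ c₁ p r q : ℝ) (F : ℝ → ℝ)
    (hT₀ : 0 ≤ T₀) (hc₀ : 0 < c₀) (hc₁ : 0 < c₁) (hp : 1 < p) (hr : 1 ≤ r)
    (hpq : q - 2 < (p - 1) * r)
    (hF : ∀ t : ℝ, T₀ ≤ t → ContDiffAt ℝ 2 F t)
    (hlow : ∀ t : ℝ, T₀ ≤ t → c₀ * (1 + t) ^ r ≤ F t)
    (hineq : ∀ t : ℝ, T₀ ≤ t → c₁ * (1 + t) ^ (-q) * |F t| ^ p ≤ deriv (deriv F) t) :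
    False :=
  kato_blowup_general T₀ c₀ c₁ p r q F hc₀ hc₁ hp hr hpq hF hlow hineq
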